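/- For every integer n ≥ 3, the independence number of the prime-coprime graph of the dihedral group D_{2n} of order 2n equals the independence number of the prime-coprime graph of the cyclic group Z_n; that is, α(Θ(D_{2n})) = α(Θ(Z_n)). -/

import Mathlib

/-- The prime-coprime graph: distinct vertices `g, h` are adjacent iff
`gcd (orderOf g) (orderOf h)` is `1` or a prime. -/
def primeCoprimeGraph (G : Type*) [Monoid G] : SimpleGraph G where
  Adj g h := g ≠ h ∧
    (Nat.gcd (orderOf g) (orderOf h) = 1 ∨ (Nat.gcd (orderOf g) (orderOf h)).Prime)
  symm := by
    constructor
    rintro g h ⟨hne, hd⟩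
    exact ⟨hne.symm, by rwa [Nat.gcd_comm]⟩
  loopless := by constructor; rintro g ⟨hne, -⟩; exact hne rfl

/-- A set of vertices is independent if no two of its elements are adjacent. -/
def IsIndepSet {V : Type*} (Γ : SimpleGraph V) (s : Set V) : Prop :=
  s.Pairwise fun a b => ¬ Γ.Adj a b

open scoped Classical in
/-- The independence number of a graph on a finite vertex set. -/
noncomputable def indepNum {V : Type*} [Fintype V] (Γ : SimpleGraph V) : ℕ :=
  Finset.univ.sup fun s : Finset V => if IsIndepSet Γ (s : Set V) then s.card else 0

/-- A graph is split if its vertex set can be partitioned into two disjoint nonempty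
subsets, one a clique and the other an independent set. -/
def IsSplit {V : Type*} (Γ : SimpleGraph V) : Prop :=
  ∃ K I : Set V, K.Nonempty ∧ I.Nonempty ∧ Disjoint K I ∧ K ∪ I = Set.univ ∧
    Γ.IsClique K ∧ IsIndepSet Γ I


/-!
The rotations form a copy of `Z_n` inside `D_{2n}` on which orders agree, so `Θ(Z_n)` is an
induced subgraph of `Θ(D_{2n})` and `α(Θ(Z_n)) ≤ α(Θ(D_{2n}))`. Conversely, a reflection has
order `2`, and `gcd(2, m)` is always `1` or `2`, so a reflection is adjacent to every other
vertex: an independent set containing a reflection is a singleton, and one without reflections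
is an independent set of `Θ(Z_n)`.
-/

section IndepNum

variable {V W : Type*} {Γ : SimpleGraph V} {Δ : SimpleGraph W}

lemma IsIndepSet.image (f : Γ ↪g Δ) {s : Set V} (hs : IsIndepSet Γ s) :
    IsIndepSet Δ (f '' s) := by
  rintro _ ⟨x, hx, rfl⟩ _ ⟨y, hy, rfl⟩ hxy hadj
  exact hs hx hy (fun h => hxy (congrArg f h)) (f.map_adj_iff.mp hadj)

lemma IsIndepSet.preimage (f : Γ ↪g Δ) {s : Set W} (hs : IsIndepSet Δ s) :
    IsIndepSet Γ (f ⁻¹' s) :=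
  fun _ hx _ hy hxy hadj => hs hx hy (f.injective.ne hxy) (f.map_adj_iff.mpr hadj)

lemma IsIndepSet.card_le_one_of_forall_adj {s : Finset V} (hs : IsIndepSet Γ (s : Set V))
    {v : V} (hv : v ∈ s) (hadj : ∀ w, w ≠ v → Γ.Adj v w) : s.card ≤ 1 := by
  have hsub : s ⊆ {v} := fun w hw => by
    rw [Finset.mem_singleton]
    by_contra hwv
    exact hs hv hw (Ne.symm hwv) (hadj w hwv)
  simpa using Finset.card_le_card hsub

variable [Fintype V]

lemma card_le_indepNum {s : Finset V} (hs : IsIndepSet Γ (s : Set V)) :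
    s.card ≤ indepNum Γ := by
  classical
  have := Finset.le_sup (f := fun s : Finset V =>
    if IsIndepSet Γ (s : Set V) then s.card else 0) (Finset.mem_univ s)
  unfold indepNum
  simpa [hs] using this

lemma indepNum_le {k : ℕ} (h : ∀ s : Finset V, IsIndepSet Γ (s : Set V) → s.card ≤ k) :
    indepNum Γ ≤ k := by
  unfold indepNum
  refine Finset.sup_le fun s _ => ?_
  split_ifs with hs
  exacts [h s hs, Nat.zero_le k]

lemma one_le_indepNum [Nonempty V] : 1 ≤ indepNum Γ := by
  obtain ⟨v⟩ := ‹Nonempty V›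
  simpa using card_le_indepNum (Γ := Γ) (s := {v}) (by simp [IsIndepSet])

lemma indepNum_le_of_embedding [Fintype W] (f : Γ ↪g Δ) : indepNum Γ ≤ indepNum Δ := by
  classical
  refine indepNum_le fun s hs => ?_
  rw [← Finset.card_image_of_injective s f.injective]
  exact card_le_indepNum (by simpa using hs.image f)

lemma card_le_indepNum_of_subset_range (f : Γ ↪g Δ) {s : Finset W}
    (hs : IsIndepSet Δ (s : Set W)) (hsub : (s : Set W) ⊆ Set.range f) :
    s.card ≤ indepNum Γ := by
  classical
  have himage : (s.preimage f f.injective.injOn).image f = s :=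
    Finset.coe_injective (by simpa using Set.image_preimage_eq_of_subset hsub)
  rw [← himage, Finset.card_image_of_injective _ f.injective]
  exact card_le_indepNum (by simpa using hs.preimage f)

end IndepNum

section PrimeCoprimeGraph

variable {G H : Type*} [Monoid G] [Monoid H]

def primeCoprimeGraph.embedding (f : H →* G) (hf : Function.Injective f) :
    primeCoprimeGraph H ↪g primeCoprimeGraph G where
  toFun := f
  inj' := hf
  map_rel_iff' {x y} := by
    simp only [primeCoprimeGraph, Function.Embedding.coeFn_mk, orderOf_injective f hf,
      hf.ne_iff]

lemma primeCoprimeGraph_adj_of_orderOf_prime {g h : G} (hg : (orderOf g).Prime) (hgh : g ≠ h) :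
    (primeCoprimeGraph G).Adj g h := by
  refine ⟨hgh, ?_⟩
  rcases (Nat.dvd_prime hg).mp (Nat.gcd_dvd_left (orderOf g) (orderOf h)) with h1 | hself
  exacts [Or.inl h1, Or.inr (hself.symm ▸ hg)]

end PrimeCoprimeGraph

namespace DihedralGroup

variable (n : ℕ)

def rotationHom : Multiplicative (ZMod n) →* DihedralGroup n where
  toFun x := r x.toAdd
  map_one' := rfl
  map_mul' _ _ := rfl

lemma rotationHom_injective : Function.Injective (rotationHom n) :=
  fun _ _ h => r.inj h

end DihedralGroup

open DihedralGroup in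
theorem indepNum_dihedral_general (n : ℕ) [NeZero n] :
    indepNum (primeCoprimeGraph (DihedralGroup n)) =
      indepNum (primeCoprimeGraph (Multiplicative (ZMod n))) := by
  let ρ := primeCoprimeGraph.embedding _ (rotationHom_injective n)
  refine le_antisymm (indepNum_le fun s hs => ?_) (indepNum_le_of_embedding ρ)
  by_cases hrefl : ∃ i, sr i ∈ s
  · obtain ⟨i, hi⟩ := hrefl
    have hadj : ∀ g, g ≠ sr i → (primeCoprimeGraph (DihedralGroup n)).Adj (sr i) g :=
      fun g hg => primeCoprimeGraph_adj_of_orderOf_prime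
        (by rw [orderOf_sr]; exact Nat.prime_two) hg.symm
    exact (hs.card_le_one_of_forall_adj hi hadj).trans one_le_indepNum
  · refine card_le_indepNum_of_subset_range ρ hs ?_
    rintro (j | j) hj
    · exact ⟨Multiplicative.ofAdd j, rfl⟩
    · exact absurd ⟨j, hj⟩ hrefl

theorem indepNum_dihedral (n : ℕ) [NeZero n] (hn : 3 ≤ n) :
    indepNum (primeCoprimeGraph (DihedralGroup n)) =
      indepNum (primeCoprimeGraph (Multiplicative (ZMod n))) :=
  indepNum_dihedral_general n
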